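/- Let N ≥ 2 be an integer, let L > 0 with L ∉ 𝒩*, and let λ ∈ ℂ. Suppose φ₁, …, φ_N : ℝ → ℂ each satisfy the KdV spectral ODE with parameter λ on [0,L], with the boundary conditions φ_j(0) = φ₁(0) for all j, Σ_{j=1}^N φ_j''(0) = 0, and φ_j(L) = 0, φ_j'(0) = 0, φ_j''(L) = 0 for all j. Then Σ_{j=1}^N φ_j vanishes identically on [0,L] if and only if every φ_j vanishes identically on [0,L]. -/

import Mathlib

/-- A function `φ : ℝ → ℂ` satisfies the KdV spectral ODE with parameter `lam` on `[0, L]`: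
it is three times continuously differentiable and `lam·φ + φ' + φ''' = 0` on `[0, L]`. -/
def KdVSpectralODE (lam : ℂ) (L : ℝ) (φ : ℝ → ℂ) : Prop :=
  ContDiff ℝ 3 φ ∧
    ∀ x ∈ Set.Icc (0 : ℝ) L, lam * φ x + deriv φ x + iteratedDeriv 3 φ x = 0

/-- The critical set 𝒩* of Glass and Guerrero. -/
def criticalNStar : Set ℝ :=
  {L : ℝ | 0 < L ∧ ∃ a b : ℂ,
    a * Complex.exp a = b * Complex.exp b ∧
    b * Complex.exp b = -(a + b) * Complex.exp (-(a + b)) ∧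
    (L : ℂ) ^ 2 = -(a ^ 2 + a * b + b ^ 2)}

/-! A solution of the spectral ODE is determined by its 2-jet `(φ, φ', φ'')` at `0`, since the jet
solves a linear first-order system. If `φ(0) = φ'(0) = 0` and `c = φ''(0) ≠ 0`, then `φ` is an
explicit exponential sum over the roots `r₁, r₂, r₃` of `r³ + r + λ` (with an extra `x e^{sx}` term
when the roots are `s, s, -2s`), and the conditions `φ(L) = φ''(L) = 0` force `r e^{-rL}` to take
the same value at all three roots. With `a = -r₁L` and `b = -r₂L`, so that `-(a + b) = -r₃L`, this
says exactly that `L ∈ 𝒩*`. On the network, `Σ φⱼ(0) = N φ₁(0)`, so every `φⱼ` falls under this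
case. -/

open Complex Set

noncomputable def expPoly (a b r : ℂ) (x : ℝ) : ℂ := (a + b * x) * exp (r * x)

@[simp]
lemma expPoly_zero (a b r : ℂ) : expPoly a b r 0 = a := by
  simp [expPoly]

lemma hasDerivAt_expPoly (a b r : ℂ) (x : ℝ) :
    HasDerivAt (expPoly a b r) (expPoly (a * r + b) (b * r) r x) x := by
  have hx : HasDerivAt (fun x : ℝ => (x : ℂ)) 1 x := (hasDerivAt_id x).ofReal_comp
  refine (((hx.const_mul b).const_add a).fun_mul (hx.const_mul r).cexp).congr_deriv ?_
  simp only [expPoly]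
  ring

lemma deriv_expPoly (a b r : ℂ) : deriv (expPoly a b r) = expPoly (a * r + b) (b * r) r :=
  funext fun x => (hasDerivAt_expPoly a b r x).deriv

@[fun_prop]
lemma contDiff_expPoly (a b r : ℂ) {n : WithTop ℕ∞} : ContDiff ℝ n (expPoly a b r) := by
  have hx : ContDiff ℝ n (fun x : ℝ => (x : ℂ)) := ofRealCLM.contDiff
  unfold expPoly
  fun_prop

lemma iteratedDeriv_expPoly (a b r : ℂ) (n : ℕ) :
    iteratedDeriv n (expPoly a b r) = expPoly (a * r ^ n + n * b * r ^ (n - 1)) (b * r ^ n) r := by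
  induction n with
  | zero => simp
  | succ n ih =>
    rw [iteratedDeriv_succ, ih, deriv_expPoly]
    congr 1
    · rcases n with _ | n
      · simp
      · push_cast
        ring
    · ring

lemma kdvSpectralODE_expPoly (lam : ℂ) (L : ℝ) {a b r : ℂ} (hr : r ^ 3 + r + lam = 0)
    (hb : b * (3 * r ^ 2 + 1) = 0) : KdVSpectralODE lam L (expPoly a b r) := by
  refine ⟨contDiff_expPoly a b r, fun x _ => ?_⟩
  rw [deriv_expPoly, iteratedDeriv_expPoly]
  simp only [expPoly]
  push_cast
  linear_combination exp (r * x) * ((a + b * x) * hr + hb)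

lemma KdVSpectralODE.add {lam : ℂ} {L : ℝ} {φ ψ : ℝ → ℂ} (hφ : KdVSpectralODE lam L φ)
    (hψ : KdVSpectralODE lam L ψ) : KdVSpectralODE lam L (φ + ψ) := by
  refine ⟨hφ.1.add hψ.1, fun x hx => ?_⟩
  rw [deriv_add (hφ.1.differentiable (by norm_num) x) (hψ.1.differentiable (by norm_num) x),
    iteratedDeriv_add hφ.1.contDiffAt hψ.1.contDiffAt]
  simp only [Pi.add_apply]
  linear_combination hφ.2 x hx + hψ.2 x hx

noncomputable def jet2 (φ : ℝ → ℂ) (t : ℝ) : ℂ × ℂ × ℂ :=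
  (φ t, deriv φ t, iteratedDeriv 2 φ t)

noncomputable def kdvCompanion (lam : ℂ) : (ℂ × ℂ × ℂ) →L[ℂ] ℂ × ℂ × ℂ :=
  LinearMap.toContinuousLinearMap
    { toFun := fun p => (p.2.1, p.2.2, -(lam * p.1) - p.2.1)
      map_add' := fun p q => Prod.ext rfl <| Prod.ext rfl <| by
        simp only [Prod.fst_add, Prod.snd_add]
        ring
      map_smul' := fun c p => Prod.ext rfl <| Prod.ext rfl <| by
        simp only [Prod.smul_fst, Prod.smul_snd, smul_eq_mul, RingHom.id_apply]
        ring }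

lemma KdVSpectralODE.hasDerivAt_jet2 {lam : ℂ} {L : ℝ} {φ : ℝ → ℂ} (hφ : KdVSpectralODE lam L φ)
    {t : ℝ} (ht : t ∈ Icc 0 L) : HasDerivAt (jet2 φ) (kdvCompanion lam (jet2 φ t)) t := by
  have hd : ∀ k < 3, HasDerivAt (iteratedDeriv k φ) (iteratedDeriv (k + 1) φ t) t :=
    fun k hk => by
      rw [iteratedDeriv_succ]
      exact (hφ.1.differentiable_iteratedDeriv k (by exact_mod_cast hk) t).hasDerivAt
  have hφ''' : iteratedDeriv 3 φ t = -(lam * φ t) - deriv φ t := by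
    linear_combination hφ.2 t ht
  have := (hd 0 (by norm_num)).prodMk ((hd 1 (by norm_num)).prodMk (hd 2 (by norm_num)))
  simp only [iteratedDeriv_zero, iteratedDeriv_one, zero_add] at this
  rwa [hφ'''] at this

lemma KdVSpectralODE.continuous_jet2 {lam : ℂ} {L : ℝ} {φ : ℝ → ℂ} (hφ : KdVSpectralODE lam L φ) :
    Continuous (jet2 φ) := by
  have hc : ∀ k < 3, Continuous (iteratedDeriv k φ) :=
    fun k hk => (hφ.1.differentiable_iteratedDeriv k (by exact_mod_cast hk)).continuous
  have := (hc 0 (by norm_num)).prodMk ((hc 1 (by norm_num)).prodMk (hc 2 (by norm_num)))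
  rwa [iteratedDeriv_zero, iteratedDeriv_one] at this

theorem KdVSpectralODE.eqOn_jet2 {lam : ℂ} {L : ℝ} {φ ψ : ℝ → ℂ} (hφ : KdVSpectralODE lam L φ)
    (hψ : KdVSpectralODE lam L ψ) (h0 : jet2 φ 0 = jet2 ψ 0) :
    EqOn (jet2 φ) (jet2 ψ) (Icc 0 L) :=
  ODE_solution_unique (v := fun _ => kdvCompanion lam) (fun _ => (kdvCompanion lam).lipschitz)
    hφ.continuous_jet2.continuousOn
    (fun _ ht => (hφ.hasDerivAt_jet2 (Ico_subset_Icc_self ht)).hasDerivWithinAt)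
    hψ.continuous_jet2.continuousOn
    (fun _ ht => (hψ.hasDerivAt_jet2 (Ico_subset_Icc_self ht)).hasDerivWithinAt) h0

lemma exists_vieta_cubic (lam : ℂ) : ∃ r₁ r₂ r₃ : ℂ,
    r₁ + r₂ + r₃ = 0 ∧ r₁ * r₂ + r₁ * r₃ + r₂ * r₃ = 1 ∧ r₁ * r₂ * r₃ = -lam := by
  obtain ⟨r, hr⟩ := Complex.exists_root (f := Polynomial.X ^ 3 + Polynomial.X + Polynomial.C lam)
    (by rw [show (Polynomial.X ^ 3 + Polynomial.X + Polynomial.C lam : Polynomial ℂ).degree = 3 by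
      compute_degree!]; norm_num)
  have hr : r ^ 3 + r + lam = 0 := by simpa using hr
  obtain ⟨d, hd⟩ := IsAlgClosed.exists_pow_nat_eq (-3 * r ^ 2 - 4) (n := 2) (by norm_num)
  exact ⟨r, (-r + d) / 2, (-r - d) / 2, by ring, by linear_combination (-1 / 4 : ℂ) * hd,
    by linear_combination (-r / 4) * hd + hr⟩

lemma cube_add_self_add_eq_zero_of_vieta {r₁ r₂ r₃ lam : ℂ} (h₁ : r₁ + r₂ + r₃ = 0)
    (h₂ : r₁ * r₂ + r₁ * r₃ + r₂ * r₃ = 1) (h₃ : r₁ * r₂ * r₃ = -lam) :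
    r₁ ^ 3 + r₁ + lam = 0 := by
  linear_combination r₁ ^ 2 * h₁ - r₁ * h₂ + h₃

lemma exists_double_root_of_vieta {r₁ r₂ r₃ lam : ℂ} (h₁ : r₁ + r₂ + r₃ = 0)
    (h₂ : r₁ * r₂ + r₁ * r₃ + r₂ * r₃ = 1) (h₃ : r₁ * r₂ * r₃ = -lam)
    (h : r₁ = r₂ ∨ r₁ = r₃ ∨ r₂ = r₃) : ∃ s : ℂ, s ^ 2 = -1 / 3 ∧ lam = 2 * s ^ 3 := by
  rcases h with rfl | rfl | rfl
  · exact ⟨r₁, by linear_combination (-1 / 3 : ℂ) * h₂ + (2 * r₁ / 3) * h₁,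
      by linear_combination h₃ - r₁ ^ 2 * h₁⟩
  · exact ⟨r₁, by linear_combination (-1 / 3 : ℂ) * h₂ + (2 * r₁ / 3) * h₁,
      by linear_combination h₃ - r₁ ^ 2 * h₁⟩
  · exact ⟨r₂, by linear_combination (-1 / 3 : ℂ) * h₂ + (2 * r₂ / 3) * h₁,
      by linear_combination h₃ - r₂ ^ 2 * h₁⟩

lemma mem_criticalNStar_of_roots {L : ℝ} (hL : 0 < L) {r₁ r₂ r₃ : ℂ} (h₁ : r₁ + r₂ + r₃ = 0)
    (h₂ : r₁ * r₂ + r₁ * r₃ + r₂ * r₃ = 1) (h₁₂ : r₂ * exp (r₁ * L) = r₁ * exp (r₂ * L))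
    (h₂₃ : r₃ * exp (r₂ * L) = r₂ * exp (r₃ * L)) : L ∈ criticalNStar := by
  obtain rfl : r₃ = -r₁ - r₂ := by linear_combination h₁
  refine ⟨hL, -(r₁ * L), -(r₂ * L), ?_, ?_, ?_⟩
  · rw [exp_neg, exp_neg, neg_mul, neg_mul, neg_inj, ← div_eq_mul_inv, ← div_eq_mul_inv,
      div_eq_div_iff (exp_ne_zero _) (exp_ne_zero _)]
    linear_combination -(L : ℂ) * h₁₂
  · rw [show -(-(r₁ * (L : ℂ)) + -(r₂ * L)) = -((-r₁ - r₂) * L) by ring, exp_neg, exp_neg,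
      neg_mul, neg_mul, neg_inj, ← div_eq_mul_inv, ← div_eq_mul_inv,
      div_eq_div_iff (exp_ne_zero _) (exp_ne_zero _)]
    linear_combination -(L : ℂ) * h₂₃
  · linear_combination (-(L : ℂ) ^ 2) * h₂

lemma mul_eq_mul_of_distinct {r₁ r₂ r₃ E₁ E₂ E₃ : ℂ} (h₁ : r₁ + r₂ + r₃ = 0) (h₁₃ : r₁ ≠ r₃)
    (h₂₃ : r₂ ≠ r₃) (h0 : (r₂ - r₃) * E₁ + (r₃ - r₁) * E₂ + (r₁ - r₂) * E₃ = 0)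
    (h2 : (r₂ - r₃) * r₁ ^ 2 * E₁ + (r₃ - r₁) * r₂ ^ 2 * E₂ + (r₁ - r₂) * r₃ ^ 2 * E₃ = 0) :
    r₂ * E₁ = r₁ * E₂ := by
  have : (r₂ - r₃) * (r₁ - r₃) * (r₂ * E₁ - r₁ * E₂) = 0 := by
    linear_combination -h2 + r₃ ^ 2 * h0 + (r₂ - r₃) * (r₁ - r₃) * (E₁ - E₂) * h₁
  simpa [sub_eq_zero, h₁₃, h₂₃] using this

lemma eq_neg_two_mul_of_double {s c E F L : ℂ} (hs : s ^ 2 = -1 / 3) (hc : c ≠ 0)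
    (hEF : E ^ 2 * F = 1) (h0 : (c / 3 - c * s * L) * E - c / 3 * F = 0)
    (h2 : (-5 / 3 * c * s ^ 2 - c * s ^ 3 * L) * E - 4 / 3 * c * s ^ 2 * F = 0) :
    F = -2 * E := by
  -- multiplied by `E²`, both relations are linear in `E³` (as `E²F = 1`); eliminate `L`
  have hE3 : c * (E ^ 3 + 1 / 2) = 0 := by
    linear_combination (1 / 2 : ℂ) * (E ^ 2 * h0 + c / 3 * hEF) +
      3 / 2 * (E ^ 2 * h2 + 4 / 3 * c * s ^ 2 * hEF) +
      1 / 2 * (c * (5 + 3 * s * L) * E ^ 3 + 4 * c) * hs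
  have hE3' : E ^ 3 = -1 / 2 := by
    linear_combination (mul_eq_zero.mp hE3).resolve_left hc
  linear_combination 2 * F * hE3' - 2 * E * hEF

section BoundaryValueProblem

variable {lam : ℂ} {L : ℝ} {φ : ℝ → ℂ}

lemma mem_criticalNStar_of_distinct_roots (hL : 0 < L) (hφ : KdVSpectralODE lam L φ)
    (h0 : φ 0 = 0) (h1 : deriv φ 0 = 0) (hc : iteratedDeriv 2 φ 0 ≠ 0) (hL0 : φ L = 0)
    (hL2 : iteratedDeriv 2 φ L = 0) {r₁ r₂ r₃ : ℂ} (h₁ : r₁ + r₂ + r₃ = 0)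
    (h₂ : r₁ * r₂ + r₁ * r₃ + r₂ * r₃ = 1) (h₃ : r₁ * r₂ * r₃ = -lam)
    (h₁₂ : r₁ ≠ r₂) (h₁₃ : r₁ ≠ r₃) (h₂₃ : r₂ ≠ r₃) : L ∈ criticalNStar := by
  have hD : (r₁ - r₂) * (r₂ - r₃) * (r₃ - r₁) ≠ 0 := by
    simp [sub_eq_zero, h₁₂, h₂₃, h₁₃.symm]
  obtain ⟨k, hk, hkD⟩ : ∃ k ≠ 0, k * ((r₁ - r₂) * (r₂ - r₃) * (r₃ - r₁)) = -iteratedDeriv 2 φ 0 :=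
    ⟨_, div_ne_zero (neg_ne_zero.mpr hc) hD, div_mul_cancel₀ _ hD⟩
  -- `Σ (r₂ - r₃) r₁ ^ n` is `0` for `n = 0, 1` and `-(r₁ - r₂) (r₂ - r₃) (r₃ - r₁)` for `n = 2`
  set ψ := fun x => expPoly (k * (r₂ - r₃)) 0 r₁ x + expPoly (k * (r₃ - r₁)) 0 r₂ x +
    expPoly (k * (r₁ - r₂)) 0 r₃ x
  have hψ : KdVSpectralODE lam L ψ := by
    refine ((kdvSpectralODE_expPoly lam L ?_ (zero_mul _)).add
      (kdvSpectralODE_expPoly lam L ?_ (zero_mul _))).add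
      (kdvSpectralODE_expPoly lam L ?_ (zero_mul _))
    · exact cube_add_self_add_eq_zero_of_vieta h₁ h₂ h₃
    · exact cube_add_self_add_eq_zero_of_vieta (r₂ := r₁) (r₃ := r₃) (by linear_combination h₁)
        (by linear_combination h₂) (by linear_combination h₃)
    · exact cube_add_self_add_eq_zero_of_vieta (r₂ := r₁) (r₃ := r₂) (by linear_combination h₁)
        (by linear_combination h₂) (by linear_combination h₃)
  have hjet : jet2 φ 0 = jet2 ψ 0 := by
    simp (disch := fun_prop) only [jet2, ψ, ← iteratedDeriv_one, iteratedDeriv_fun_add,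
      iteratedDeriv_expPoly, expPoly_zero, Prod.mk.injEq, mul_zero, zero_mul, add_zero]
    refine ⟨by rw [h0]; ring, by rw [iteratedDeriv_one, h1]; ring, by linear_combination hkD⟩
  have hjetL := hφ.eqOn_jet2 hψ hjet ⟨hL.le, le_rfl⟩
  simp (disch := fun_prop) only [jet2, ψ, hL0, hL2, iteratedDeriv_fun_add,
    iteratedDeriv_expPoly, Prod.mk.injEq] at hjetL
  simp only [expPoly, mul_zero, zero_mul, add_zero] at hjetL
  obtain ⟨hψ0, -, hψ2⟩ := hjetL
  have hE0 : (r₂ - r₃) * exp (r₁ * L) + (r₃ - r₁) * exp (r₂ * L) + (r₁ - r₂) * exp (r₃ * L) = 0 :=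
    mul_left_cancel₀ hk (by linear_combination -hψ0)
  have hE2 : (r₂ - r₃) * r₁ ^ 2 * exp (r₁ * L) + (r₃ - r₁) * r₂ ^ 2 * exp (r₂ * L) +
      (r₁ - r₂) * r₃ ^ 2 * exp (r₃ * L) = 0 :=
    mul_left_cancel₀ hk (by linear_combination -hψ2)
  exact mem_criticalNStar_of_roots hL h₁ h₂ (mul_eq_mul_of_distinct h₁ h₁₃ h₂₃ hE0 hE2)
    (mul_eq_mul_of_distinct (E₃ := exp (r₁ * L)) (by linear_combination h₁) h₁₂.symm h₁₃.symm
      (by linear_combination hE0) (by linear_combination hE2))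

lemma mem_criticalNStar_of_double_root (hL : 0 < L) (hφ : KdVSpectralODE lam L φ)
    (h0 : φ 0 = 0) (h1 : deriv φ 0 = 0) (hc : iteratedDeriv 2 φ 0 ≠ 0) (hL0 : φ L = 0)
    (hL2 : iteratedDeriv 2 φ L = 0) {s : ℂ} (hs : s ^ 2 = -1 / 3) (hlam : lam = 2 * s ^ 3) :
    L ∈ criticalNStar := by
  set c := iteratedDeriv 2 φ 0
  set ψ := fun x => expPoly (c / 3) (-c * s) s x + expPoly (-c / 3) 0 (-2 * s) x
  have hψ : KdVSpectralODE lam L ψ :=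
    (kdvSpectralODE_expPoly lam L (by linear_combination hlam + 3 * s * hs)
      (by linear_combination (-3 * c * s) * hs)).add
    (kdvSpectralODE_expPoly lam L (by linear_combination hlam - 6 * s * hs) (zero_mul _))
  have hjet : jet2 φ 0 = jet2 ψ 0 := by
    simp (disch := fun_prop) only [jet2, ψ, ← iteratedDeriv_one, iteratedDeriv_fun_add,
      iteratedDeriv_expPoly, expPoly_zero, Prod.mk.injEq]
    refine ⟨by rw [h0]; ring, by rw [iteratedDeriv_one, h1]; ring, by linear_combination 3 * c * hs⟩
  have hjetL := hφ.eqOn_jet2 hψ hjet ⟨hL.le, le_rfl⟩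
  simp (disch := fun_prop) only [jet2, ψ, hL0, hL2, iteratedDeriv_fun_add,
    iteratedDeriv_expPoly, Prod.mk.injEq] at hjetL
  simp only [expPoly, mul_zero, zero_mul, add_zero] at hjetL
  obtain ⟨hψ0, -, hψ2⟩ := hjetL
  have hEF : exp (s * L) ^ 2 * exp (-2 * s * L) = 1 := by
    rw [sq, ← exp_add, ← exp_add, ← exp_zero]
    ring_nf
  have hF := eq_neg_two_mul_of_double (L := L) hs hc hEF (by linear_combination -hψ0)
    (by linear_combination -hψ2)
  refine mem_criticalNStar_of_roots (r₁ := s) (r₂ := s) (r₃ := -2 * s) hL (by ring)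
    (by linear_combination -3 * hs) rfl ?_
  rw [hF]
  ring

theorem KdVSpectralODE.eqOn_zero_of_boundary (hL : 0 < L) (hLN : L ∉ criticalNStar)
    (hφ : KdVSpectralODE lam L φ) (h0 : φ 0 = 0) (h1 : deriv φ 0 = 0) (hL0 : φ L = 0)
    (hL2 : iteratedDeriv 2 φ L = 0) : EqOn φ 0 (Icc 0 L) := by
  by_cases hc : iteratedDeriv 2 φ 0 = 0
  · have hzero : KdVSpectralODE lam L 0 := ⟨contDiff_const, fun x _ => by simp⟩
    exact fun x hx => congrArg Prod.fst (hφ.eqOn_jet2 hzero (by simp [jet2, h0, h1, hc]) hx)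
  obtain ⟨r₁, r₂, r₃, h₁, h₂, h₃⟩ := exists_vieta_cubic lam
  refine absurd ?_ hLN
  by_cases hdistinct : r₁ ≠ r₂ ∧ r₁ ≠ r₃ ∧ r₂ ≠ r₃
  · exact mem_criticalNStar_of_distinct_roots hL hφ h0 h1 hc hL0 hL2 h₁ h₂ h₃
      hdistinct.1 hdistinct.2.1 hdistinct.2.2
  · obtain ⟨s, hs, hlam⟩ := exists_double_root_of_vieta h₁ h₂ h₃ (by tauto)
    exact mem_criticalNStar_of_double_root hL hφ h0 h1 hc hL0 hL2 hs hlam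

end BoundaryValueProblem

theorem stmt11 (N : ℕ) (hN : 2 ≤ N) (L : ℝ) (hL : 0 < L) (hLN : L ∉ criticalNStar)
    (lam : ℂ) (φ : Fin N → ℝ → ℂ)
    (hode : ∀ j, KdVSpectralODE lam L (φ j))
    (hb0 : ∀ j, φ j 0 = φ ⟨0, by omega⟩ 0)
    (hb2 : ∀ j, φ j L = 0)
    (hb3 : ∀ j, deriv (φ j) 0 = 0)
    (hb4 : ∀ j, iteratedDeriv 2 (φ j) L = 0) :
    (∀ x ∈ Set.Icc (0 : ℝ) L, (∑ j, φ j x) = 0) ↔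
      (∀ j, ∀ x ∈ Set.Icc (0 : ℝ) L, φ j x = 0) := by
  refine ⟨fun hsum j => ?_, fun hall x hx => Finset.sum_eq_zero fun j _ => hall j x hx⟩
  have hφ0 : φ ⟨0, by omega⟩ 0 = 0 := by
    have h := hsum 0 ⟨le_rfl, hL.le⟩
    rw [Finset.sum_congr rfl fun j _ => hb0 j, Finset.sum_const, Finset.card_univ,
      Fintype.card_fin, nsmul_eq_mul] at h
    exact (mul_eq_zero.mp h).resolve_left (Nat.cast_ne_zero.mpr (by omega))
  exact (hode j).eqOn_zero_of_boundary hL hLN ((hb0 j).trans hφ0) (hb3 j) (hb2 j) (hb4 j)
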